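/- Fix an integer n ≥ 1 and λ0 ∈ ℂ with Im(λ0) ≠ 0, and take the parameters a_j, b_j, ζ, ω_j, z0 as in the context. Then the b_j are pairwise distinct, a_j² = −(b_j + z0)^{n+1} / ∏_{k≠j}(b_j − b_k) for every j = 1,…,n, and consequently D(z) = (z − z0)^{n+1} as polynomials in ℂ[z]. -/

import Mathlib

open Polynomial Complex Finset

noncomputable section

/-- `ζ = 2·Im(λ0)/(n+1)`. -/
def zeta (n : ℕ) (l0 : ℂ) : ℝ := 2 * l0.im / (n + 1)

/-- `ω_j = jπ/(n+1)`. -/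
def om (n j : ℕ) : ℝ := j * Real.pi / (n + 1)

/-- `a_j = ζ·csc(ω_j)` for `j = 1,…,n` (indexed by `j : Fin n` as `j+1`). -/
def aa (n : ℕ) (l0 : ℂ) (j : Fin n) : ℝ := zeta n l0 / Real.sin (om n ((j : ℕ) + 1))

/-- `b_j = ζ·cot(ω_j) − 2·Re(λ0)` for `j = 1,…,n`. -/
def bb (n : ℕ) (l0 : ℂ) (j : Fin n) : ℝ :=
  zeta n l0 * (Real.cos (om n ((j : ℕ) + 1)) / Real.sin (om n ((j : ℕ) + 1))) - 2 * l0.re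

/-- `z0 = 2·Re(λ0) + i·ζ`. -/
def zz0 (n : ℕ) (l0 : ℂ) : ℂ := 2 * l0.re + Complex.I * zeta n l0

/-- The characteristic polynomial
`D(z) = (z − 2λ0)·∏ⱼ (z + bⱼ) − Σⱼ aⱼ²·∏_{k≠j} (z + bₖ)` in `ℂ[z]`. -/
def Dpoly (n : ℕ) (l0 : ℂ) (a b : Fin n → ℝ) : Polynomial ℂ :=
  (X - C (2 * l0)) * ∏ j, (X + C (b j : ℂ))
    - ∑ j, C ((a j : ℂ) ^ 2) * ∏ k ∈ Finset.univ.erase j, (X + C (b k : ℂ))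

/-!
Put `t_j = b_j + z0` and `δ = 2iζ`. Then `t_j = a_j e^{iω_j}` and `t_j - δ = a_j e^{-iω_j}`, so
`a_j² = t_j (t_j - δ)` and, since `e^{2i(n+1)ω_j} = 1`, `t_j^{n+1} = (t_j - δ)^{n+1}`. Hence the
`t_j` are the `n` roots of `X^{n+1} - (X - δ)^{n+1}`, a polynomial of degree `n` with leading
coefficient `(n+1)δ`; differentiating its factorisation at `t_j` gives
`(t_j - δ) ∏_{k≠j} (t_j - t_k) = -t_j^n`, which is the formula for `a_j²`.

For `D`, both sides are monic of degree `n+1` with the same coefficient of `z^n` (the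
cotangents `cot ω_j` sum to zero by the symmetry `ω ↦ π - ω`), so `D(z) - (z - z0)^{n+1}` has
degree `< n`, and it vanishes at the `n` distinct points `-b_j` by the formula for `a_j²`.
-/

open Lagrange

theorem degree_sub_lt_of_monic_of_nextCoeff_eq {R : Type*} [Ring R] [Nontrivial R] {p q : R[X]}
    {n : ℕ} (hp : p.Monic) (hq : q.Monic) (hpn : p.natDegree = n + 1) (hqn : q.natDegree = n + 1)
    (hnext : p.nextCoeff = q.nextCoeff) : (p - q).degree < n := by
  have hpd : p.degree = n + 1 := by rw [degree_eq_natDegree hp.ne_zero, hpn]; rfl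
  have hlt : (p - q).degree < n + 1 := by
    refine hpd ▸ degree_sub_lt_left ?_ hp.ne_zero (by rw [hp.leadingCoeff, hq.leadingCoeff])
    rw [hpd, degree_eq_natDegree hq.ne_zero, hqn]; rfl
  rw [nextCoeff_of_natDegree_pos (by omega), nextCoeff_of_natDegree_pos (by omega), hpn, hqn,
    Nat.add_sub_cancel] at hnext
  rw [degree_lt_iff_coeff_zero]
  intro m hm
  rcases hm.eq_or_lt with rfl | hm
  · rw [coeff_sub, hnext, sub_self]
  · exact coeff_eq_zero_of_degree_lt (hlt.trans_le (by exact_mod_cast hm))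

section Polynomials

variable {K : Type*} [Field K]

theorem coeff_X_pow_sub_X_sub_C_pow (δ : K) (n m : ℕ) :
    (X ^ (n + 1) - (X - C δ) ^ (n + 1)).coeff m =
      (if m = n + 1 then 1 else 0) - (-δ) ^ (n + 1 - m) * ((n + 1).choose m : K) := by
  rw [coeff_sub, coeff_X_pow, sub_eq_add_neg X, ← C_neg, coeff_X_add_C_pow]

theorem natDegree_X_pow_sub_X_sub_C_pow {δ : K} {n : ℕ} (h : ((n : K) + 1) * δ ≠ 0) :
    (X ^ (n + 1) - (X - C δ) ^ (n + 1)).natDegree = n := by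
  refine natDegree_eq_of_le_of_coeff_ne_zero
    (natDegree_le_iff_coeff_eq_zero.2 fun m hm => ?_) ?_
  · rw [coeff_X_pow_sub_X_sub_C_pow]
    obtain rfl | hm := Nat.succ_le_of_lt hm |>.eq_or_lt
    · simp
    · simp [hm.ne', Nat.choose_eq_zero_of_lt hm]
  · rw [coeff_X_pow_sub_X_sub_C_pow]
    simpa [mul_comm] using h

theorem leadingCoeff_X_pow_sub_X_sub_C_pow {δ : K} {n : ℕ} (h : ((n : K) + 1) * δ ≠ 0) :
    (X ^ (n + 1) - (X - C δ) ^ (n + 1)).leadingCoeff = (n + 1) * δ := by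
  rw [leadingCoeff, natDegree_X_pow_sub_X_sub_C_pow h, coeff_X_pow_sub_X_sub_C_pow]
  simp [mul_comm]

variable {ι : Type*} [Fintype ι]

theorem eq_C_leadingCoeff_mul_nodal {t : ι → K} (ht : Function.Injective t) {p : K[X]}
    (hdeg : p.natDegree = Fintype.card ι) (hroot : ∀ i, p.eval (t i) = 0) :
    p = C p.leadingCoeff * nodal univ t := by
  rcases eq_or_ne p 0 with rfl | hp
  · simp
  have hlc : p.leadingCoeff ≠ 0 := leadingCoeff_ne_zero.2 hp
  refine eq_of_degree_le_of_eval_index_eq univ ht.injOn ?_ ?_ ?_ ?_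
  · rw [degree_eq_natDegree hp, hdeg, card_univ]
  · rw [degree_C_mul hlc, degree_nodal, degree_eq_natDegree hp, hdeg, card_univ]
  · rw [leadingCoeff_mul, leadingCoeff_C, nodal_monic.leadingCoeff, mul_one]
  · intro i _
    rw [hroot, eval_mul, eval_nodal_at_node (mem_univ i), mul_zero]

variable [DecidableEq ι]

theorem eval_derivative_eq_leadingCoeff_mul_prod_erase {t : ι → K} (ht : Function.Injective t)
    {p : K[X]} (hdeg : p.natDegree = Fintype.card ι) (hroot : ∀ i, p.eval (t i) = 0) (j : ι) :
    (derivative p).eval (t j) = p.leadingCoeff * ∏ k ∈ univ.erase j, (t j - t k) := by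
  rw [eq_C_leadingCoeff_mul_nodal ht hdeg hroot, derivative_C_mul, eval_mul, eval_C,
    eval_nodal_derivative_eval_node_eq (mem_univ j), eval_nodal, leadingCoeff_mul, leadingCoeff_C,
    nodal_monic.leadingCoeff, mul_one]

theorem sub_mul_prod_erase_sub_eq_neg_pow [CharZero K] {t : ι → K} (ht : Function.Injective t)
    {δ : K} (hδ : δ ≠ 0)
    (hroot : ∀ k, t k ^ (Fintype.card ι + 1) = (t k - δ) ^ (Fintype.card ι + 1)) (j : ι) :
    (t j - δ) * ∏ k ∈ univ.erase j, (t j - t k) = -t j ^ Fintype.card ι := by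
  have hc : ((Fintype.card ι : K) + 1) * δ ≠ 0 := mul_ne_zero (Nat.cast_add_one_ne_zero _) hδ
  have hderiv := eval_derivative_eq_leadingCoeff_mul_prod_erase ht
    (natDegree_X_pow_sub_X_sub_C_pow hc) (fun k => by simp [hroot k]) j
  rw [leadingCoeff_X_pow_sub_X_sub_C_pow hc] at hderiv
  simp only [derivative_sub, derivative_X_pow, derivative_X_sub_C_pow, eval_sub, eval_mul,
    eval_pow, eval_X, eval_C] at hderiv
  push_cast at hderiv
  refine mul_left_cancel₀ hc ?_
  linear_combination -(t j - δ) * hderiv + ((Fintype.card ι : K) + 1) * hroot j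

theorem X_sub_C_mul_nodal_sub_sum_eq {x : ι → K} (hx : Function.Injective x) {G : K[X]}
    (hG : G.Monic) (hdeg : G.natDegree = Fintype.card ι + 1) (c : K)
    (hnext : G.nextCoeff = -(c + ∑ i, x i)) (w : ι → K)
    (heval : ∀ j, G.eval (x j) = -(w j * ∏ k ∈ univ.erase j, (x j - x k))) :
    (X - C c) * nodal univ x - ∑ j, C (w j) * nodal (univ.erase j) x = G := by
  have hF : ((X - C c) * nodal univ x).Monic := (monic_X_sub_C c).mul nodal_monic
  have hFG : (X - C c) * nodal univ x - G ∈ degreeLT K (Fintype.card ι) := by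
    refine mem_degreeLT.2 (degree_sub_lt_of_monic_of_nextCoeff_eq hF hG ?_ hdeg ?_)
    · rw [(monic_X_sub_C c).natDegree_mul nodal_monic, natDegree_X_sub_C, natDegree_nodal,
        card_univ, add_comm]
    · rw [hnext, (monic_X_sub_C c).nextCoeff_mul nodal_monic, nextCoeff_X_sub_C, nodal,
        Monic.nextCoeff_prod _ _ fun i _ => monic_X_sub_C (x i)]
      simp only [nextCoeff_X_sub_C, sum_neg_distrib, neg_add]
  have hA : ∑ j, C (w j) * nodal (univ.erase j) x ∈ degreeLT K (Fintype.card ι) := by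
    refine Submodule.sum_mem _ fun j _ => ?_
    rw [← smul_eq_C_mul]
    refine Submodule.smul_mem _ _ (mem_degreeLT.2 ?_)
    rw [degree_nodal, ← card_univ]
    exact_mod_cast card_erase_lt_of_mem (mem_univ j)
  refine eq_of_degree_sub_lt_of_eval_index_eq univ hx.injOn ?_ fun j _ => ?_
  · rw [sub_right_comm, ← mem_degreeLT, card_univ]
    exact Submodule.sub_mem _ hFG hA
  · rw [heval, eval_sub, eval_mul, eval_nodal_at_node (mem_univ j), mul_zero, zero_sub,
      eval_finsetSum, sum_eq_single j, eval_mul, eval_C, eval_nodal]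
    · intro i _ hij
      rw [eval_mul, eval_nodal_at_node (mem_erase.2 ⟨hij.symm, mem_univ j⟩), mul_zero]
    · exact fun h => absurd (mem_univ j) h

end Polynomials

section Parameters

variable {n : ℕ} {l0 : ℂ}

theorem zeta_ne_zero (him : l0.im ≠ 0) : zeta n l0 ≠ 0 :=
  div_ne_zero (mul_ne_zero two_ne_zero him) (Nat.cast_add_one_ne_zero n)

theorem om_mem_Ioo (j : Fin n) : om n (j + 1) ∈ Set.Ioo 0 Real.pi := by
  have hj : ((j : ℕ) : ℝ) + 1 < n + 1 := by exact_mod_cast Nat.succ_lt_succ j.2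
  constructor
  · unfold om; positivity
  · rw [om, div_lt_iff₀ (by positivity)]
    push_cast
    nlinarith [Real.pi_pos]

theorem sin_om_ne_zero (j : Fin n) : Real.sin (om n (j + 1)) ≠ 0 :=
  (Real.sin_pos_of_pos_of_lt_pi (om_mem_Ioo j).1 (om_mem_Ioo j).2).ne'

theorem om_injective : Function.Injective fun j : Fin n => om n (j + 1) := by
  intro j k h
  simp only [om] at h
  field_simp [Real.pi_ne_zero] at h
  have : (j : ℕ) + 1 = k + 1 := by exact_mod_cast h
  exact Fin.ext (by omega)

theorem cos_div_sin_injOn : Set.InjOn (fun x => Real.cos x / Real.sin x) (Set.Ioo 0 Real.pi) := by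
  intro x hx y hy h
  have hsx := (Real.sin_pos_of_pos_of_lt_pi hx.1 hx.2).ne'
  have hsy := (Real.sin_pos_of_pos_of_lt_pi hy.1 hy.2).ne'
  rw [div_eq_div_iff hsx hsy] at h
  have hsin : Real.sin (y - x) = 0 := by rw [Real.sin_sub]; linarith
  have := (Real.sin_eq_zero_iff_of_lt_of_lt (by linarith [hx.2, hy.1])
    (by linarith [hx.1, hy.2])).1 hsin
  linarith

theorem bb_injective (him : l0.im ≠ 0) : Function.Injective (bb n l0) := by
  intro j k h
  have hcot := mul_left_cancel₀ (zeta_ne_zero him) (sub_left_injective h)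
  exact om_injective (cos_div_sin_injOn (om_mem_Ioo j) (om_mem_Ioo k) hcot)

theorem bb_add_zz0 (j : Fin n) :
    (bb n l0 j : ℂ) + zz0 n l0 = aa n l0 j * exp (om n (j + 1) * I) := by
  have hs : sin (om n (j + 1) : ℂ) ≠ 0 := by
    rw [← ofReal_sin]; exact ofReal_ne_zero.2 (sin_om_ne_zero j)
  rw [exp_mul_I, bb, aa, zz0]
  push_cast
  field_simp
  ring

theorem bb_add_zz0_sub (j : Fin n) :
    (bb n l0 j : ℂ) + zz0 n l0 - 2 * I * zeta n l0 = aa n l0 j * exp (-(om n (j + 1) * I)) := by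
  have hs : sin (om n (j + 1) : ℂ) ≠ 0 := by
    rw [← ofReal_sin]; exact ofReal_ne_zero.2 (sin_om_ne_zero j)
  rw [← neg_mul, exp_mul_I, cos_neg, sin_neg, bb, aa, zz0]
  push_cast
  field_simp
  ring

theorem exp_om_mul_I_pow (j : ℕ) :
    exp (om n j * I) ^ (n + 1) = exp (-(om n j * I)) ^ (n + 1) := by
  rw [← exp_nat_mul, ← exp_nat_mul, exp_eq_exp_iff_exists_int]
  refine ⟨j, ?_⟩
  simp only [om]
  push_cast
  field_simp
  ring

theorem aa_sq_mul_prod_erase (him : l0.im ≠ 0) (j : Fin n) :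
    (aa n l0 j : ℂ) ^ 2 * ∏ k ∈ univ.erase j, ((bb n l0 j : ℂ) - bb n l0 k) =
      -((bb n l0 j : ℂ) + zz0 n l0) ^ (n + 1) := by
  have ht : Function.Injective fun k => (bb n l0 k : ℂ) + zz0 n l0 :=
    fun j k h => bb_injective him (ofReal_injective (add_right_cancel h))
  have hδ : 2 * I * zeta n l0 ≠ 0 :=
    mul_ne_zero (mul_ne_zero two_ne_zero I_ne_zero) (ofReal_ne_zero.2 (zeta_ne_zero him))
  have hroot : ∀ k, ((bb n l0 k : ℂ) + zz0 n l0) ^ (Fintype.card (Fin n) + 1) =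
      ((bb n l0 k : ℂ) + zz0 n l0 - 2 * I * zeta n l0) ^ (Fintype.card (Fin n) + 1) := by
    intro k
    rw [Fintype.card_fin, bb_add_zz0_sub, bb_add_zz0, mul_pow, mul_pow, exp_om_mul_I_pow]
  have hprod := sub_mul_prod_erase_sub_eq_neg_pow ht hδ hroot j
  have hsq : (aa n l0 j : ℂ) ^ 2 =
      ((bb n l0 j : ℂ) + zz0 n l0) * ((bb n l0 j : ℂ) + zz0 n l0 - 2 * I * zeta n l0) := by
    rw [bb_add_zz0_sub, bb_add_zz0, mul_mul_mul_comm, ← exp_add, add_neg_cancel, exp_zero,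
      mul_one, sq]
  simp only [add_sub_add_right_eq_sub, Fintype.card_fin] at hprod
  rw [hsq, mul_assoc, hprod]
  ring

theorem sum_cos_div_sin_om :
    ∑ j : Fin n, Real.cos (om n (j + 1)) / Real.sin (om n (j + 1)) = 0 := by
  have hrev : ∀ j : Fin n, om n ((Fin.rev j : ℕ) + 1) = Real.pi - om n (j + 1) := by
    intro j
    have hj : n - (j + 1) + 1 = n - j := by omega
    rw [Fin.val_rev, hj, om, om, Nat.cast_sub j.2.le]
    push_cast
    field_simp
    ring
  set f : Fin n → ℝ := fun j => Real.cos (om n (j + 1)) / Real.sin (om n (j + 1))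
  have h := Fintype.sum_equiv Fin.revPerm f (fun j => -f j) fun j => by
    simp only [f, Fin.revPerm_apply, hrev, Real.cos_pi_sub, Real.sin_pi_sub, neg_div, neg_neg]
  rw [sum_neg_distrib] at h
  linarith

theorem sum_bb : ∑ j, bb n l0 j = -(2 * n * l0.re) := by
  simp only [bb, sum_sub_distrib, ← mul_sum, sum_cos_div_sin_om, sum_const, card_univ,
    Fintype.card_fin, nsmul_eq_mul]
  ring

end Parameters

theorem Dpoly_eq_nodal (n : ℕ) (l0 : ℂ) (a b : Fin n → ℝ) :
    Dpoly n l0 a b = (X - C (2 * l0)) * nodal univ (fun k => -(b k : ℂ)) -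
      ∑ j, C ((a j : ℂ) ^ 2) * nodal (univ.erase j) (fun k => -(b k : ℂ)) := by
  simp only [Dpoly, nodal, C_neg, sub_neg_eq_add]

theorem Dpoly_aa_bb {n : ℕ} {l0 : ℂ} (him : l0.im ≠ 0) :
    Dpoly n l0 (aa n l0) (bb n l0) = (X - C (zz0 n l0)) ^ (n + 1) := by
  rw [Dpoly_eq_nodal]
  have hx : Function.Injective fun k => -(bb n l0 k : ℂ) :=
    fun j k h => bb_injective him (ofReal_injective (neg_injective h))
  refine X_sub_C_mul_nodal_sub_sum_eq hx ((monic_X_sub_C _).pow _)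
    (by rw [natDegree_pow, natDegree_X_sub_C, Fintype.card_fin, mul_one]) _ ?_ _ fun j => ?_
  · have hsum : ∑ k, (bb n l0 k : ℂ) = -(2 * n * l0.re) := by exact_mod_cast sum_bb
    rw [(monic_X_sub_C _).nextCoeff_pow, nextCoeff_X_sub_C, sum_neg_distrib, hsum, zz0, zeta,
      nsmul_eq_mul]
    push_cast
    field_simp
    linear_combination -re_add_im l0
  · have hcard : #(univ.erase j) + 2 = n + 1 := by
      rw [card_erase_of_mem (mem_univ j), card_univ, Fintype.card_fin]; have := j.2; omega
    have hprod : ∏ k ∈ univ.erase j, (-(bb n l0 j : ℂ) - -(bb n l0 k : ℂ)) =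
        (-1) ^ #(univ.erase j) * ∏ k ∈ univ.erase j, ((bb n l0 j : ℂ) - bb n l0 k) := by
      rw [← prod_neg, prod_congr rfl fun k _ => neg_sub_neg _ _ |>.trans (neg_sub _ _).symm]
    have key := aa_sq_mul_prod_erase him j
    rw [← hcard] at key ⊢
    rw [eval_pow, eval_sub, eval_X, eval_C, hprod, ← neg_add', neg_pow]
    linear_combination (-1 : ℂ) ^ #(univ.erase j) * key

theorem stmt4_general (n : ℕ) (l0 : ℂ) (him : l0.im ≠ 0) :
    Function.Injective (bb n l0) ∧
    (∀ j : Fin n, (aa n l0 j : ℂ) ^ 2 =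
        -((bb n l0 j : ℂ) + zz0 n l0) ^ (n + 1) /
          ∏ k ∈ Finset.univ.erase j, ((bb n l0 j : ℂ) - (bb n l0 k : ℂ))) ∧
    Dpoly n l0 (aa n l0) (bb n l0) = (X - C (zz0 n l0)) ^ (n + 1) := by
  refine ⟨bb_injective him, fun j => ?_, Dpoly_aa_bb him⟩
  have hne : ∏ k ∈ univ.erase j, ((bb n l0 j : ℂ) - bb n l0 k) ≠ 0 :=
    prod_ne_zero_iff.2 fun k hk => sub_ne_zero.2 fun h =>
      (mem_erase.1 hk).1 (bb_injective him (ofReal_injective h)).symm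
  rw [eq_div_iff hne, aa_sq_mul_prod_erase him j]

/-- with the explicit choice `a_j = ζ csc ω_j`, `b_j = ζ cot ω_j − 2Re(λ0)`,
the `b_j` are pairwise distinct, `a_j² = −(b_j + z0)^{n+1}/∏_{k≠j}(b_j − b_k)`, and
`D(z) = (z − z0)^{n+1}`. -/
theorem stmt4 (n : ℕ) (hn : 1 ≤ n) (l0 : ℂ) (him : l0.im ≠ 0) :
    Function.Injective (bb n l0) ∧
    (∀ j : Fin n, (aa n l0 j : ℂ) ^ 2 =
        -((bb n l0 j : ℂ) + zz0 n l0) ^ (n + 1) /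
          ∏ k ∈ Finset.univ.erase j, ((bb n l0 j : ℂ) - (bb n l0 k : ℂ))) ∧
    Dpoly n l0 (aa n l0) (bb n l0) = (X - C (zz0 n l0)) ^ (n + 1) :=
  stmt4_general n l0 him

end
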